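/- arXiv:1203.3706 — 2 statements merged into one kernel-verified Lean document; each statement's English description precedes it below -/
import Mathlib

section
/- Let f be a QLTL formula in negation normal form and Occ(f₁), Occ(f₂) two positive-polarity subformula occurrences of f such that Eq(Occ(f₁),Occ(f₂)) holds, where Eq is the reflexive-symmetric-transitive closure of the relation Eq₀ generated by: Occ(f₂) is a superformula occurrence of Occ(f₁) and f₂ has one of the forms f₁ ∨ Z, A U f₁, A W f₁, f₁ W FALSE, or X f₁. Then f[Occ(f₁) ← TRUE] is logically equivalent to f[Occ(f₂) ← TRUE]. -/
/- QLTL in negation normal form: LTL with propositional quantifiers. Subformula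
occurrences are represented by one-hole contexts (all contexts are positive since
the syntax is in NNF). -/

inductive QLTL (P : Type) : Type
  | tt : QLTL P
  | ff : QLTL P
  | var : P → QLTL P
  | nvar : P → QLTL P
  | and : QLTL P → QLTL P → QLTL P
  | or : QLTL P → QLTL P → QLTL P
  | next : QLTL P → QLTL P
  | unt : QLTL P → QLTL P → QLTL P
  | wunt : QLTL P → QLTL P → QLTL P
  | ex : P → QLTL P → QLTL P
  | all : P → QLTL P → QLTL P

/-- `M'` differs from `M` solely at the instances of `p`. -/
def DiffOnly {P : Type} (M M' : ℕ → Set P) (p : P) : Prop :=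
  ∀ q, q ≠ p → ∀ j, (q ∈ M' j ↔ q ∈ M j)

def QSat {P : Type} : (ℕ → Set P) → QLTL P → ℕ → Prop
  | _, .tt, _ => True
  | _, .ff, _ => False
  | M, .var p, i => p ∈ M i
  | M, .nvar p, i => p ∉ M i
  | M, .and a b, i => QSat M a i ∧ QSat M b i
  | M, .or a b, i => QSat M a i ∨ QSat M b i
  | M, .next a, i => QSat M a (i + 1)
  | M, .unt a b, i => ∃ j, i ≤ j ∧ QSat M b j ∧ ∀ k, i ≤ k → k < j → QSat M a k
  | M, .wunt a b, i =>
      (∀ j, i ≤ j → QSat M a j) ∨ (∃ j, i ≤ j ∧ QSat M b j ∧ ∀ k, i ≤ k → k < j → QSat M a k)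
  | M, .ex p a, i => ∃ M', DiffOnly M M' p ∧ QSat M' a i
  | M, .all p a, i => ∀ M', DiffOnly M M' p → QSat M' a i

/-- One-hole contexts for QLTL (NNF, so every occurrence has positive polarity). -/
inductive Ctx (P : Type) : Type
  | hole : Ctx P
  | andL : Ctx P → QLTL P → Ctx P
  | andR : QLTL P → Ctx P → Ctx P
  | orL : Ctx P → QLTL P → Ctx P
  | orR : QLTL P → Ctx P → Ctx P
  | nextC : Ctx P → Ctx P
  | untL : Ctx P → QLTL P → Ctx P
  | untR : QLTL P → Ctx P → Ctx P
  | wuntL : Ctx P → QLTL P → Ctx P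
  | wuntR : QLTL P → Ctx P → Ctx P
  | exC : P → Ctx P → Ctx P
  | allC : P → Ctx P → Ctx P

def Ctx.fill {P : Type} : Ctx P → QLTL P → QLTL P
  | .hole, g => g
  | .andL c r, g => .and (c.fill g) r
  | .andR l c, g => .and l (c.fill g)
  | .orL c r, g => .or (c.fill g) r
  | .orR l c, g => .or l (c.fill g)
  | .nextC c, g => .next (c.fill g)
  | .untL c r, g => .unt (c.fill g) r
  | .untR l c, g => .unt l (c.fill g)
  | .wuntL c r, g => .wunt (c.fill g) r
  | .wuntR l c, g => .wunt l (c.fill g)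
  | .exC p c, g => .ex p (c.fill g)
  | .allC p c, g => .all p (c.fill g)

/-- Context composition: `(c.comp d).fill g = c.fill (d.fill g)`. -/
def Ctx.comp {P : Type} : Ctx P → Ctx P → Ctx P
  | .hole, d => d
  | .andL c r, d => .andL (c.comp d) r
  | .andR l c, d => .andR l (c.comp d)
  | .orL c r, d => .orL (c.comp d) r
  | .orR l c, d => .orR l (c.comp d)
  | .nextC c, d => .nextC (c.comp d)
  | .untL c r, d => .untL (c.comp d) r
  | .untR l c, d => .untR l (c.comp d)
  | .wuntL c r, d => .wuntL (c.comp d) r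
  | .wuntR l c, d => .wuntR l (c.comp d)
  | .exC p c, d => .exC p (c.comp d)
  | .allC p c, d => .allC p (c.comp d)

/-- `Eq0 c₁ c₂`: the occurrence with context `c₁` (of some `f₁`) sits immediately below
the occurrence with context `c₂` (of `f₂`), where `f₂` has one of the forms
`f₁ ∨ Z`, `A U f₁`, `A W f₁`, `f₁ W FALSE`, or `X f₁`. -/
inductive Eq0 {P : Type} : Ctx P → Ctx P → Prop
  | orZ (c : Ctx P) (Z : QLTL P) : Eq0 (c.comp (.orL .hole Z)) c
  | untR (c : Ctx P) (A : QLTL P) : Eq0 (c.comp (.untR A .hole)) c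
  | wuntR (c : Ctx P) (A : QLTL P) : Eq0 (c.comp (.wuntR A .hole)) c
  | gw (c : Ctx P) : Eq0 (c.comp (.wuntL .hole .ff)) c
  | nx (c : Ctx P) : Eq0 (c.comp (.nextC .hole)) c

/-- Reflexive-symmetric-transitive closure. -/
inductive EqClos {α : Type} (r : α → α → Prop) : α → α → Prop
  | base {a b} : r a b → EqClos r a b
  | refl (a) : EqClos r a a
  | symm {a b} : EqClos r a b → EqClos r b a
  | trans {a b c} : EqClos r a b → EqClos r b c → EqClos r a c

/-! Substituting `TRUE` at an occurrence of `f₁` inside `f₂ ∈ {f₁ ∨ Z, A U f₁, A W f₁, f₁ W FALSE, X f₁}`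
turns `f₂` into a formula equivalent to `TRUE`. Logical equivalence is a congruence for
contexts, so each `Eq₀` step preserves the equivalence class of the substituted formula, and
being an equivalence relation it then contains the whole closure `Eq`. -/

def QEquiv {P : Type} (g g' : QLTL P) : Prop :=
  ∀ (M : ℕ → Set P) (i : ℕ), QSat M g i ↔ QSat M g' i

theorem QEquiv.equivalence {P : Type} : Equivalence (@QEquiv P) where
  refl _ _ _ := Iff.rfl
  symm h M i := (h M i).symm
  trans h h' M i := (h M i).trans (h' M i)

theorem EqClos.of_equivalence {α : Type} {r s : α → α → Prop} (hs : Equivalence s)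
    (hrs : ∀ {a b}, r a b → s a b) {a b : α} (h : EqClos r a b) : s a b := by
  induction h with
  | base hab => exact hrs hab
  | refl a => exact hs.refl a
  | symm _ ih => exact hs.symm ih
  | trans _ _ ih ih' => exact hs.trans ih ih'

namespace Ctx

variable {P : Type}

@[simp]
theorem comp_fill (c d : Ctx P) (g : QLTL P) : (c.comp d).fill g = c.fill (d.fill g) := by
  induction c <;> simp_all only [comp, fill]

theorem fill_congr (c : Ctx P) {g g' : QLTL P} (h : QEquiv g g') :
    QEquiv (c.fill g) (c.fill g') := by
  unfold QEquiv at *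
  induction c <;> intro M i <;> simp only [fill, QSat, *]

end Ctx

namespace QEquiv

variable {P : Type}

theorem or_tt_left (Z : QLTL P) : QEquiv (.or .tt Z) .tt := fun _ _ => by
  simp only [QSat, true_or]

theorem unt_tt_right (A : QLTL P) : QEquiv (.unt A .tt) .tt := fun _ i => by
  simp only [QSat, true_and, iff_true]
  exact ⟨i, le_rfl, fun _ hik hki => absurd hik (not_le.mpr hki)⟩

theorem wunt_tt_right (A : QLTL P) : QEquiv (.wunt A .tt) .tt := fun M i =>
  iff_true_intro (Or.inr ((unt_tt_right A M i).mpr trivial))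

theorem wunt_tt_ff : QEquiv (.wunt .tt .ff : QLTL P) .tt := fun _ _ =>
  iff_true_intro (Or.inl fun _ _ => trivial)

theorem next_tt : QEquiv (.next .tt : QLTL P) .tt := fun _ _ => Iff.rfl

end QEquiv

theorem Eq0.fill_tt_equiv {P : Type} {d c : Ctx P} (h : Eq0 d c) :
    QEquiv (d.fill .tt) (c.fill .tt) := by
  cases h with
  | orZ c Z => simpa only [Ctx.comp_fill, Ctx.fill] using c.fill_congr (QEquiv.or_tt_left Z)
  | untR c A => simpa only [Ctx.comp_fill, Ctx.fill] using c.fill_congr (QEquiv.unt_tt_right A)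
  | wuntR c A => simpa only [Ctx.comp_fill, Ctx.fill] using c.fill_congr (QEquiv.wunt_tt_right A)
  | gw c => simpa only [Ctx.comp_fill, Ctx.fill] using c.fill_congr QEquiv.wunt_tt_ff
  | nx c => simpa only [Ctx.comp_fill, Ctx.fill] using c.fill_congr QEquiv.next_tt

theorem stmt5_general {P : Type} (c₁ c₂ : Ctx P)
    (heq : EqClos Eq0 c₁ c₂) :
    ∀ (M : ℕ → Set P) (i : ℕ), QSat M (c₁.fill .tt) i ↔ QSat M (c₂.fill .tt) i :=
  show QEquiv (c₁.fill .tt) (c₂.fill .tt) from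
    heq.of_equivalence (QEquiv.equivalence.comap (Ctx.fill · .tt)) Eq0.fill_tt_equiv

/-- If two positive occurrences `Occ(f₁)`, `Occ(f₂)` of a QLTL formula `f` are related
by `Eq`, then `f[Occ(f₁)←TRUE]` is logically equivalent to `f[Occ(f₂)←TRUE]`. -/
theorem stmt5 {P : Type} (f f₁ f₂ : QLTL P) (c₁ c₂ : Ctx P)
    (h₁ : c₁.fill f₁ = f) (h₂ : c₂.fill f₂ = f)
    (heq : EqClos Eq0 c₁ c₂) :
    ∀ (M : ℕ → Set P) (i : ℕ), QSat M (c₁.fill .tt) i ↔ QSat M (c₂.fill .tt) i :=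
  stmt5_general c₁ c₂ heq
end

section
/- Every LTL formula f is equisatisfiable with the formula f' = x_f ∧ ⋀_{f''∈UCS} G(f''), where UCS is the set of definitional clauses produced by the SNF transformation (x_{ψ₁∧ψ₂}⇒x_{ψᵢ}; x_{ψ₁∨ψ₂}⇒(x_{ψ₁}∨x_{ψ₂}); x_{X ψ₁}⇒X(x_{ψ₁}); x_{ψ₁ U ψ₂}⇒(x_{ψ₂}∨(x_{ψ₁}∧X x_{ψ₁Uψ₂})) together with x_{ψ₁Uψ₂}⇒F(x_{ψ₂}); x_{ψ₁ W ψ₂}⇒(x_{ψ₂}∨(x_{ψ₁}∧X x_{ψ₁Wψ₂})); x_ψ⇒ψ for literals ψ), with fresh variables x_ψ for each subformula ψ of f. -/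
/- LTL in negation normal form (negation only on propositional variables), with
standard semantics over linear time structures `M : ℕ → Set P`. -/

inductive LTL (P : Type) : Type
  | tt : LTL P
  | ff : LTL P
  | var : P → LTL P
  | nvar : P → LTL P
  | and : LTL P → LTL P → LTL P
  | or : LTL P → LTL P → LTL P
  | next : LTL P → LTL P
  | unt : LTL P → LTL P → LTL P   -- strong until U
  | wunt : LTL P → LTL P → LTL P  -- weak until W
  deriving DecidableEq

def Sat {P : Type} (M : ℕ → Set P) : LTL P → ℕ → Prop
  | .tt, _ => True
  | .ff, _ => False
  | .var p, i => p ∈ M i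
  | .nvar p, i => p ∉ M i
  | .and a b, i => Sat M a i ∧ Sat M b i
  | .or a b, i => Sat M a i ∨ Sat M b i
  | .next a, i => Sat M a (i + 1)
  | .unt a b, i => ∃ j, i ≤ j ∧ Sat M b j ∧ ∀ k, i ≤ k → k < j → Sat M a k
  | .wunt a b, i =>
      (∀ j, i ≤ j → Sat M a j) ∨ (∃ j, i ≤ j ∧ Sat M b j ∧ ∀ k, i ≤ k → k < j → Sat M a k)

def LTL.G {P : Type} (a : LTL P) : LTL P := .wunt a .ff
def LTL.F {P : Type} (a : LTL P) : LTL P := .unt .tt a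

def bigAnd {P : Type} (l : List (LTL P)) : LTL P := l.foldr .and .tt
def bigOr {P : Type} (l : List (LTL P)) : LTL P := l.foldr .or .ff

/- Definitional SNF transformation: fresh definitional variables `x_ψ` are indexed by
the subformulas `ψ` themselves, so formulas of the transform live over `P ⊕ LTL P`. -/

def xv {P : Type} (g : LTL P) : LTL (P ⊕ LTL P) := .var (Sum.inr g)
def nxv {P : Type} (g : LTL P) : LTL (P ⊕ LTL P) := .nvar (Sum.inr g)

/-- The set UCS of definitional clauses of the SNF transformation. -/
def ucs {P : Type} : LTL P → List (LTL (P ⊕ LTL P))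
  | .tt => [.or (nxv .tt) .tt]
  | .ff => [.or (nxv .ff) .ff]
  | .var p => [.or (nxv (.var p)) (.var (Sum.inl p))]
  | .nvar p => [.or (nxv (.nvar p)) (.nvar (Sum.inl p))]
  | .and a b => [.or (nxv (.and a b)) (xv a), .or (nxv (.and a b)) (xv b)]
      ++ ucs a ++ ucs b
  | .or a b => [.or (nxv (.or a b)) (.or (xv a) (xv b))] ++ ucs a ++ ucs b
  | .next a => [.or (nxv (.next a)) (.next (xv a))] ++ ucs a
  | .unt a b =>
      [.or (nxv (.unt a b)) (.or (xv b) (.and (xv a) (.next (xv (.unt a b))))),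
       .or (nxv (.unt a b)) (LTL.F (xv b))] ++ ucs a ++ ucs b
  | .wunt a b =>
      [.or (nxv (.wunt a b)) (.or (xv b) (.and (xv a) (.next (xv (.wunt a b)))))]
      ++ ucs a ++ ucs b

/-- `f' = x_f ∧ ⋀_{f'' ∈ UCS} G(f'')`. -/
def snf {P : Type} (f : LTL P) : LTL (P ⊕ LTL P) :=
  .and (xv f) (bigAnd ((ucs f).map LTL.G))

/-!
From a model `M` of `f`, interpret each `x_ψ` as "`ψ` holds now": this satisfies `x_f`, and
the clauses for `U` and `W` hold by the fixpoint unfoldings of these operators. Conversely,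
given a model of the transform, restrict it to the original variables; by induction on `ψ`,
`x_ψ` at time `i` forces `ψ` at time `i`. For `W` this is the fact that weak until is the
greatest fixpoint of its unfolding; for `U` the extra clause `x_{ψ₁ U ψ₂} ⇒ F x_{ψ₂}`
supplies the eventuality that turns this weak until into a strong one.
-/

section Semantics

variable {Q : Type} {M : ℕ → Set Q} {a b : LTL Q} {i : ℕ}

lemma sat_G : Sat M (LTL.G a) i ↔ ∀ j, i ≤ j → Sat M a j := by
  simp [LTL.G, Sat]

lemma sat_F : Sat M (LTL.F a) i ↔ ∃ j, i ≤ j ∧ Sat M a j := by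
  simp [LTL.F, Sat]

lemma sat_bigAnd {l : List (LTL Q)} : Sat M (bigAnd l) i ↔ ∀ c ∈ l, Sat M c i := by
  induction l with
  | nil => simp [bigAnd, Sat]
  | cons c l ih => simp [bigAnd, Sat, ← ih]

lemma Sat.unt_unfold (h : Sat M (.unt a b) i) :
    Sat M b i ∨ (Sat M a i ∧ Sat M (.unt a b) (i + 1)) := by
  obtain ⟨j, hij, hb, ha⟩ := h
  rcases hij.eq_or_lt with rfl | hlt
  · exact .inl hb
  · exact .inr ⟨ha i le_rfl hlt, j, hlt, hb, fun k hk => ha k (by omega)⟩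

lemma Sat.wunt_unfold (h : Sat M (.wunt a b) i) :
    Sat M b i ∨ (Sat M a i ∧ Sat M (.wunt a b) (i + 1)) := by
  rcases h with ha | hu
  · exact .inr ⟨ha i le_rfl, .inl fun j hj => ha j (by omega)⟩
  · exact (Sat.unt_unfold hu).imp_right (And.imp_right .inr)

/-- Weak until is the greatest solution of its fixpoint equation. -/
lemma sat_wunt_of_postfixpoint {X : ℕ → Prop}
    (step : ∀ m, X m → Sat M b m ∨ (Sat M a m ∧ X (m + 1))) (hX : X i) :
    Sat M (.wunt a b) i := by
  by_cases hu : Sat M (.unt a b) i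
  · exact .inr hu
  have run : ∀ d, X (i + d) ∧ ∀ k, i ≤ k → k < i + d → Sat M a k := by
    intro d
    induction d with
    | zero => exact ⟨hX, fun _ _ hk => by omega⟩
    | succ d ih =>
      obtain ⟨hXd, ha⟩ := ih
      rcases step _ hXd with hb | ⟨had, hXd'⟩
      · exact (hu ⟨i + d, by omega, hb, ha⟩).elim
      · refine ⟨hXd', fun k hik hk => ?_⟩
        rcases (Nat.lt_succ_iff.mp hk).lt_or_eq with hk | rfl
        exacts [ha k hik hk, had]
  exact .inl fun j hj => (run (j + 1 - i)).2 j hj (by omega)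

lemma Sat.F_of_unt (h : Sat M (.unt a b) i) : Sat M (LTL.F b) i :=
  let ⟨j, hij, hb, _⟩ := h
  sat_F.2 ⟨j, hij, hb⟩

lemma Sat.unt_of_wunt (h : Sat M (.wunt a b) i) (hF : ∃ j, i ≤ j ∧ Sat M b j) :
    Sat M (.unt a b) i := by
  rcases h with ha | hu
  · obtain ⟨j, hij, hb⟩ := hF
    exact ⟨j, hij, hb, fun k hk _ => ha k hk⟩
  · exact hu

end Semantics

section Clauses

variable {P : Type}

lemma sat_or_nxv {M' : ℕ → Set (P ⊕ LTL P)} {g : LTL P} {c : LTL (P ⊕ LTL P)} {i : ℕ} :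
    Sat M' (.or (nxv g) c) i ↔ (Sum.inr g ∈ M' i → Sat M' c i) :=
  imp_iff_not_or.symm

def labelModel (M : ℕ → Set P) : ℕ → Set (P ⊕ LTL P) :=
  fun i => Sum.elim (M i) (Sat M · i)

def restrictModel (M' : ℕ → Set (P ⊕ LTL P)) : ℕ → Set P :=
  fun i => Sum.inl ⁻¹' M' i

lemma sat_labelModel_of_mem_ucs (M : ℕ → Set P) (g : LTL P) :
    ∀ c ∈ ucs g, ∀ i, Sat (labelModel M) c i := by
  induction g <;> simp only [ucs, List.forall_mem_append, List.forall_mem_cons,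
    List.not_mem_nil, IsEmpty.forall_iff, implies_true, and_true, sat_or_nxv, and_assoc]
  case tt => exact fun _ _ => trivial
  case ff | var | nvar => exact fun _ h => h
  case and a b iha ihb => exact ⟨fun _ h => h.1, fun _ h => h.2, iha, ihb⟩
  case or a b iha ihb => exact ⟨fun _ h => h, iha, ihb⟩
  case next a iha => exact ⟨fun _ h => h, iha⟩
  case unt a b iha ihb =>
    exact ⟨fun _ h => Sat.unt_unfold h, fun _ h => Sat.F_of_unt (M := M) h, iha, ihb⟩
  case wunt a b iha ihb => exact ⟨fun _ h => Sat.wunt_unfold h, iha, ihb⟩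

lemma sat_restrictModel_of_clauses (M' : ℕ → Set (P ⊕ LTL P)) (g : LTL P)
    (hc : ∀ c ∈ ucs g, ∀ i, Sat M' c i) :
    ∀ i, Sum.inr g ∈ M' i → Sat (restrictModel M') g i := by
  induction g <;> simp only [ucs, List.forall_mem_append, List.forall_mem_cons,
    List.not_mem_nil, IsEmpty.forall_iff, implies_true, and_true, sat_or_nxv, and_assoc] at hc
  case tt => exact fun _ _ => trivial
  case ff | var | nvar => exact hc
  case and a b iha ihb =>
    obtain ⟨hxa, hxb, ha, hb⟩ := hc
    exact fun i hx => ⟨iha ha i (hxa i hx), ihb hb i (hxb i hx)⟩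
  case or a b iha ihb =>
    obtain ⟨hx, ha, hb⟩ := hc
    exact fun i hxi => (hx i hxi).imp (iha ha i) (ihb hb i)
  case next a iha =>
    obtain ⟨hx, ha⟩ := hc
    exact fun i hxi => iha ha (i + 1) (hx i hxi)
  case unt a b iha ihb =>
    obtain ⟨hstep, hF, ha, hb⟩ := hc
    intro i hx
    have hw : Sat (restrictModel M') (.wunt a b) i := sat_wunt_of_postfixpoint
      (fun m hm => (hstep m hm).imp (ihb hb m) (And.imp_left (iha ha m))) hx
    obtain ⟨j, hij, hbj⟩ := sat_F.1 (hF i hx)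
    exact hw.unt_of_wunt ⟨j, hij, ihb hb j hbj⟩
  case wunt a b iha ihb =>
    obtain ⟨hstep, ha, hb⟩ := hc
    exact fun i hx => sat_wunt_of_postfixpoint
      (fun m hm => (hstep m hm).imp (ihb hb m) (And.imp_left (iha ha m))) hx

lemma sat_snf_iff {M' : ℕ → Set (P ⊕ LTL P)} {f : LTL P} :
    Sat M' (snf f) 0 ↔ Sum.inr f ∈ M' 0 ∧ ∀ c ∈ ucs f, ∀ i, Sat M' c i := by
  simp only [snf, Sat, sat_bigAnd, List.forall_mem_map, sat_G, Nat.zero_le, forall_const]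
  rfl

end Clauses

/-- Every LTL formula is equisatisfiable with its definitional SNF. -/
theorem stmt8 {P : Type} (f : LTL P) :
    (∃ M : ℕ → Set P, Sat M f 0) ↔ (∃ M' : ℕ → Set (P ⊕ LTL P), Sat M' (snf f) 0) := by
  simp only [sat_snf_iff]
  constructor
  · rintro ⟨M, hM⟩
    exact ⟨labelModel M, hM, sat_labelModel_of_mem_ucs M f⟩
  · rintro ⟨M', hx, hc⟩
    exact ⟨restrictModel M', sat_restrictModel_of_clauses M' f hc 0 hx⟩
end
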